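/- arXiv:1203.0050 — 7 statements merged into one kernel-verified Lean document; each statement's English description precedes it below -/
import Mathlib

section
/- Let G = (V, E) be a finite simple graph with a nonnegative cost function c : V → ℝ, and let (M, y) be a complementary pair. Then ∑_{v∈M} c(v) ≤ 2·∑_{e∈E} y(e), and consequently ∑_{v∈M} c(v) ≤ 2·∑_{v∈M'} c(v) for every vertex cover M' of G; that is, M is a 2-approximate minimum-cost vertex cover. -/
/-!
Summing the tightness equations over `M` counts every `y e` once per endpoint of `e` lying in `M`,
hence at most twice, so `c(M) ≤ 2 ∑ y`. Conversely a vertex cover `M'` contains an endpoint of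
every edge, so summing the feasibility inequalities over `M'` gives `∑ y ≤ c(M')`.
-/

open Finset

namespace Finset

variable {V R : Type*} [DecidableEq V]

theorem sum_sum_filter_mem_eq_sum_card_nsmul [AddCommMonoid R]
    (S : Finset V) (E : Finset (Sym2 V)) (y : Sym2 V → R) :
    ∑ v ∈ S, ∑ e ∈ E.filter (v ∈ ·), y e = ∑ e ∈ E, #(S.filter (· ∈ e)) • y e := by
  simp only [sum_filter]
  rw [sum_comm]
  refine sum_congr rfl fun e _ => ?_
  rw [← sum_filter, sum_const]

theorem card_filter_mem_sym2_le_two (S : Finset V) (e : Sym2 V) :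
    #(S.filter (· ∈ e)) ≤ 2 :=
  calc #(S.filter (· ∈ e))
      ≤ #e.toFinset := card_le_card fun _ hv => Sym2.mem_toFinset.2 (mem_filter.1 hv).2
    _ ≤ 2 := by rw [Sym2.card_toFinset]; split <;> omega

variable [AddCommMonoid R] [PartialOrder R] [IsOrderedAddMonoid R]

theorem sum_sum_filter_mem_le_two_nsmul (S : Finset V) (E : Finset (Sym2 V))
    {y : Sym2 V → R} (hy : ∀ e, 0 ≤ y e) :
    ∑ v ∈ S, ∑ e ∈ E.filter (v ∈ ·), y e ≤ 2 • ∑ e ∈ E, y e := by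
  rw [sum_sum_filter_mem_eq_sum_card_nsmul, smul_sum]
  exact sum_le_sum fun e _ => nsmul_le_nsmul_left (hy e) (card_filter_mem_sym2_le_two S e)

theorem sum_le_sum_sum_filter_mem {S : Finset V} {E : Finset (Sym2 V)}
    (hS : ∀ e ∈ E, ∃ v ∈ S, v ∈ e) {y : Sym2 V → R} (hy : ∀ e, 0 ≤ y e) :
    ∑ e ∈ E, y e ≤ ∑ v ∈ S, ∑ e ∈ E.filter (v ∈ ·), y e := by
  rw [sum_sum_filter_mem_eq_sum_card_nsmul]
  refine sum_le_sum fun e he => ?_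
  obtain ⟨v, hvS, hve⟩ := hS e he
  have hpos : 0 < #(S.filter (· ∈ e)) := card_pos.2 ⟨v, mem_filter.2 ⟨hvS, hve⟩⟩
  simpa using nsmul_le_nsmul_left (hy e) hpos

end Finset

theorem SimpleGraph.IsVertexCover.exists_mem_of_mem_edgeSet {V : Type*} {G : SimpleGraph V}
    {S : Set V} (hS : G.IsVertexCover S) {e : Sym2 V} (he : e ∈ G.edgeSet) :
    ∃ v ∈ S, v ∈ e := by
  induction e using Sym2.ind with
  | _ u w =>
    rcases hS he with h | h
    · exact ⟨u, h, Sym2.mem_mk_left u w⟩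
    · exact ⟨w, h, Sym2.mem_mk_right u w⟩

theorem stmt_0_general {V : Type*} [Fintype V] [DecidableEq V]
    (G : SimpleGraph V) [DecidableRel G.Adj]
    (c : V → ℝ)
    (M : Finset V) (y : Sym2 V → ℝ)
    (hy0 : ∀ e, 0 ≤ y e)
    (hyfeas : ∀ v : V, ∑ e ∈ G.edgeFinset.filter (fun e => v ∈ e), y e ≤ c v)
    (htight : ∀ v ∈ M, ∑ e ∈ G.edgeFinset.filter (fun e => v ∈ e), y e = c v) :
    (∑ v ∈ M, c v ≤ 2 * ∑ e ∈ G.edgeFinset, y e) ∧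
      ∀ M' : Finset V, (∀ ⦃u w : V⦄, G.Adj u w → u ∈ M' ∨ w ∈ M') →
        ∑ v ∈ M, c v ≤ 2 * ∑ v ∈ M', c v := by
  have hprimal : ∑ v ∈ M, c v ≤ 2 * ∑ e ∈ G.edgeFinset, y e := by
    rw [← sum_congr rfl htight, two_mul, ← two_nsmul]
    exact sum_sum_filter_mem_le_two_nsmul M G.edgeFinset hy0
  refine ⟨hprimal, fun M' hM' => ?_⟩
  have hM'cover : G.IsVertexCover (M' : Set V) := hM'
  have hdual : ∑ e ∈ G.edgeFinset, y e ≤ ∑ v ∈ M', c v :=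
    calc ∑ e ∈ G.edgeFinset, y e
        ≤ ∑ v ∈ M', ∑ e ∈ G.edgeFinset.filter (v ∈ ·), y e :=
          sum_le_sum_sum_filter_mem
            (fun _ he => hM'cover.exists_mem_of_mem_edgeSet (G.mem_edgeFinset.1 he)) hy0
      _ ≤ ∑ v ∈ M', c v := sum_le_sum fun v _ => hyfeas v
  linarith

/-- For a finite simple graph `G` with nonnegative costs `c`, if `(M, y)` is a
complementary pair (a vertex cover `M` together with a feasible dual solution `y` making every
vertex of `M` tight), then `∑_{v∈M} c v ≤ 2 ∑_{e∈E} y e`, and consequently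
`∑_{v∈M} c v ≤ 2 ∑_{v∈M'} c v` for every vertex cover `M'`. -/
theorem stmt_0 {V : Type*} [Fintype V] [DecidableEq V]
    (G : SimpleGraph V) [DecidableRel G.Adj]
    (c : V → ℝ) (hc : ∀ v, 0 ≤ c v)
    (M : Finset V) (y : Sym2 V → ℝ)
    (hcover : ∀ ⦃u w : V⦄, G.Adj u w → u ∈ M ∨ w ∈ M)
    (hy0 : ∀ e, 0 ≤ y e)
    (hyfeas : ∀ v : V, ∑ e ∈ G.edgeFinset.filter (fun e => v ∈ e), y e ≤ c v)
    (htight : ∀ v ∈ M, ∑ e ∈ G.edgeFinset.filter (fun e => v ∈ e), y e = c v) :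
    (∑ v ∈ M, c v ≤ 2 * ∑ e ∈ G.edgeFinset, y e) ∧
      ∀ M' : Finset V, (∀ ⦃u w : V⦄, G.Adj u w → u ∈ M' ∨ w ∈ M') →
        ∑ v ∈ M, c v ≤ 2 * ∑ v ∈ M', c v :=
  stmt_0_general G c M y hy0 hyfeas htight
end

section
/- For every finite simple graph G = (V, E) with a nonnegative cost function c : V → ℝ, there exists a complementary pair (M, y); that is, there exist a vertex cover M of G and a feasible dual solution y such that every v ∈ M is tight for y. (This is the output of the Bar-Yehuda–Even primal-dual algorithm.) -/
/-!
Bar-Yehuda–Even primal-dual argument: take the edges one at a time and raise the dual variable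
of the current edge `e` until one endpoint `v₀` becomes tight, i.e. to `t = min_{v ∈ e} c v`.
Subtracting `t` from the costs of both endpoints leaves nonnegative residual costs, under which
`v₀` costs nothing; a complementary pair for the remaining edges and the residual costs, extended
by `y e = t` and `v₀`, is then a complementary pair for all edges and the original costs.
-/

open Finset

section

variable {V : Type*} [DecidableEq V]

def dualLoad (E : Finset (Sym2 V)) (y : Sym2 V → ℝ) (v : V) : ℝ :=
  ∑ e ∈ E.filter (v ∈ ·), y e

structure IsComplementaryPair (E : Finset (Sym2 V)) (c : V → ℝ) (M : Finset V)
    (y : Sym2 V → ℝ) : Prop where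
  covers : ∀ e ∈ E, ∃ v ∈ M, v ∈ e
  nonneg : ∀ e, 0 ≤ y e
  feasible : ∀ v, dualLoad E y v ≤ c v
  tight : ∀ v ∈ M, dualLoad E y v = c v

lemma dualLoad_nonneg {E : Finset (Sym2 V)} {y : Sym2 V → ℝ} (hy : ∀ e, 0 ≤ y e) (v : V) :
    0 ≤ dualLoad E y v :=
  sum_nonneg fun e _ => hy e

lemma dualLoad_insert_update {s : Finset (Sym2 V)} {e : Sym2 V} (he : e ∉ s)
    (y : Sym2 V → ℝ) (t : ℝ) (v : V) :
    dualLoad (insert e s) (Function.update y e t) v = dualLoad s y v + if v ∈ e then t else 0 := by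
  have h_off : ∑ f ∈ s.filter (v ∈ ·), Function.update y e t f = ∑ f ∈ s.filter (v ∈ ·), y f :=
    sum_congr rfl fun f hf =>
      Function.update_of_ne (ne_of_mem_of_not_mem (mem_filter.mp hf).1 he) _ _
  unfold dualLoad
  rw [filter_insert]
  split_ifs
  · rw [sum_insert (fun h => he (mem_filter.mp h).1), Function.update_self, h_off, add_comm]
  · rw [h_off, add_zero]

omit [DecidableEq V] in
lemma Sym2.exists_mem_forall_le {α : Type*} [LinearOrder α] (c : V → α) (e : Sym2 V) :
    ∃ v ∈ e, ∀ w ∈ e, c v ≤ c w := by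
  induction e using Sym2.ind with
  | _ u w =>
    rcases le_total (c u) (c w) with h | h
    · exact ⟨u, Sym2.mem_mk_left u w, by simp [h]⟩
    · exact ⟨w, Sym2.mem_mk_right u w, by simp [h]⟩

lemma IsComplementaryPair.insert {s : Finset (Sym2 V)} {e : Sym2 V} (he : e ∉ s)
    {c : V → ℝ} {v₀ : V} (hv₀ : v₀ ∈ e) (hc₀ : 0 ≤ c v₀) {M : Finset V} {y : Sym2 V → ℝ}
    (h : IsComplementaryPair s (fun v => c v - if v ∈ e then c v₀ else 0) M y) :
    IsComplementaryPair (insert e s) c (insert v₀ M) (Function.update y e (c v₀)) := by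
  have h_load (v : V) := dualLoad_insert_update he y (c v₀) v
  refine ⟨?_, ?_, ?_, ?_⟩
  · intro f hf
    rcases mem_insert.mp hf with rfl | hf
    · exact ⟨v₀, mem_insert_self _ _, hv₀⟩
    · obtain ⟨v, hvM, hvf⟩ := h.covers f hf
      exact ⟨v, mem_insert_of_mem hvM, hvf⟩
  · intro f
    rcases eq_or_ne f e with rfl | hfe
    · simpa using hc₀
    · simpa [hfe] using h.nonneg f
  · intro v
    linarith [h_load v, h.feasible v]
  · intro v hv
    rcases mem_insert.mp hv with rfl | hvM
    · -- `v` has residual cost `0`, so its residual load vanishes.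
      have h_zero : dualLoad s y v = 0 := by
        have := h.feasible v
        simp only [hv₀, if_true, sub_self] at this
        exact le_antisymm this (dualLoad_nonneg h.nonneg v)
      simp [h_load, h_zero, hv₀]
    · linarith [h_load v, h.tight v hvM]

theorem exists_isComplementaryPair (E : Finset (Sym2 V)) (c : V → ℝ) (hc : ∀ v, 0 ≤ c v) :
    ∃ M y, IsComplementaryPair E c M y := by
  induction E using Finset.induction_on generalizing c with
  | empty =>
    exact ⟨∅, 0, ⟨by simp, by simp, by simpa [dualLoad] using hc, by simp⟩⟩
  | insert e s he ih =>
    obtain ⟨v₀, hv₀, hmin⟩ := Sym2.exists_mem_forall_le c e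
    have hc' : ∀ v, 0 ≤ c v - if v ∈ e then c v₀ else 0 := by
      intro v
      split_ifs with hv
      · linarith [hmin v hv]
      · simpa using hc v
    obtain ⟨M, y, h⟩ := ih _ hc'
    exact ⟨_, _, h.insert he hv₀ (hc v₀)⟩

end

/-- For every finite simple graph `G` with nonnegative costs `c` there exists a
complementary pair `(M, y)`: a vertex cover `M` and a feasible dual solution `y` (nonnegative,
with `∑_{e ∋ v} y e ≤ c v` for all `v`) such that every `v ∈ M` is tight for `y`. -/
theorem stmt_1 {V : Type*} [Fintype V] [DecidableEq V]
    (G : SimpleGraph V) [DecidableRel G.Adj]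
    (c : V → ℝ) (hc : ∀ v, 0 ≤ c v) :
    ∃ (M : Finset V) (y : Sym2 V → ℝ),
      (∀ ⦃u w : V⦄, G.Adj u w → u ∈ M ∨ w ∈ M) ∧
      (∀ e, 0 ≤ y e) ∧
      (∀ v : V, ∑ e ∈ G.edgeFinset.filter (fun e => v ∈ e), y e ≤ c v) ∧
      (∀ v ∈ M, ∑ e ∈ G.edgeFinset.filter (fun e => v ∈ e), y e = c v) := by
  obtain ⟨M, y, h⟩ := exists_isComplementaryPair G.edgeFinset c hc
  refine ⟨M, y, fun u w huw => ?_, h.nonneg, h.feasible, h.tight⟩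
  obtain ⟨v, hvM, hv⟩ := h.covers s(u, w) (G.mem_edgeFinset.mpr huw)
  rcases Sym2.mem_iff.mp hv with rfl | rfl
  · exact Or.inl hvM
  · exact Or.inr hvM
end

section
/- Let (M, y) be a complementary pair for the graph G = (V, E) with costs c. Define the strategy profile of the Mafia Vertex Cover Game in which M is the set of mafiosi, C = V∖M are civilians, and each mafioso u sets ransoms r(u,w) = y(uw) for every neighbor w of u. Then this strategy profile is a pure Nash equilibrium. -/
open Finset
open scoped Classical

namespace MafiaVC

variable {V : Type*} [Fintype V] [DecidableEq V]

noncomputable section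

/-- The demand `D(v) = ∑_{u∈M} r(u,v)` asked from agent `v`. -/
def demand (M : Finset V) (r : V → V → ℝ) (v : V) : ℝ := ∑ u ∈ M, r u v

/-- A valid strategy profile of the Mafia Vertex Cover Game: ransoms are nonnegative,
`r u w = 0` unless `u` is a mafioso and `uw` is an edge, and every mafioso `u` distributes
exactly `c u` among his neighbors. -/
def ValidProfile (G : SimpleGraph V) [DecidableRel G.Adj] (c : V → ℝ)
    (M : Finset V) (r : V → V → ℝ) : Prop :=
  (∀ u w, 0 ≤ r u w) ∧
  (∀ u w, u ∉ M ∨ ¬ G.Adj u w → r u w = 0) ∧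
  (∀ u ∈ M, ∑ w ∈ G.neighborFinset u, r u w = c u)

/-- Utility of agent `v` in the Mafia Vertex Cover Game.  A mafioso gets
`-c v + F⁺(v) - F⁻(v)` where `F⁻(v) = min(D v, c v)` and protected mafiosi
(`u ∈ M` with `D u > c u`) pay only the fraction `c u / D u` of the demanded ransom.
A civilian gets `-D v` minus the penalty `T` if he is incident to an uncovered edge. -/
def utility (G : SimpleGraph V) [DecidableRel G.Adj] (c : V → ℝ) (T : ℝ)
    (M : Finset V) (r : V → V → ℝ) (v : V) : ℝ :=
  if v ∈ M then
    -c v +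
      (∑ u ∈ G.neighborFinset v,
        if u ∈ M ∧ c u < demand M r u then (c u / demand M r u) * r v u else r v u) -
      min (demand M r v) (c v)
  else
    -demand M r v - (if ∃ u ∈ G.neighborFinset v, u ∉ M then T else 0)

/-- `(M', r')` is a unilateral deviation of agent `v` from `(M, r)`:
all other agents keep their strategies. -/
def Deviation (v : V) (M M' : Finset V) (r r' : V → V → ℝ) : Prop :=
  (∀ u, u ≠ v → (u ∈ M' ↔ u ∈ M)) ∧ ∀ u w, u ≠ v → r' u w = r u w

/-- `(M, r)` is a pure Nash equilibrium: it is a valid profile and no agent can strictly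
increase his utility by a unilateral deviation. -/
def IsNashEq (G : SimpleGraph V) [DecidableRel G.Adj] (c : V → ℝ) (T : ℝ)
    (M : Finset V) (r : V → V → ℝ) : Prop :=
  ValidProfile G c M r ∧
  ∀ (v : V) (M' : Finset V) (r' : V → V → ℝ),
    ValidProfile G c M' r' → Deviation v M M' r r' →
      utility G c T M' r' v ≤ utility G c T M r v

/-
Since `y` is feasible, the dual ransoms never demand more than `c(v)` from anyone, so nobody is
protected and every agent's utility is exactly `-D(v)`: mafiosi break even by tightness, and
civilians are never penalised because `M` is a vertex cover. A unilateral deviation of `v` does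
not change `D(v)`, and in any profile `v` gets at most `-min(D(v), c(v))`: as a mafioso he
collects at most the `c(v)` he demands, as a civilian he pays `D(v)` plus a nonnegative penalty.
-/

theorem _root_.SimpleGraph.incidenceFinset_eq_image_neighborFinset (G : SimpleGraph V)
    [DecidableRel G.Adj] (v : V) :
    G.incidenceFinset v = (G.neighborFinset v).image (s(v, ·)) := by
  ext e
  induction e using Sym2.ind with
  | _ a b =>
    simp only [SimpleGraph.mem_incidenceFinset, SimpleGraph.mk'_mem_incidenceSet_iff, mem_image,
      SimpleGraph.mem_neighborFinset]
    constructor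
    · rintro ⟨hab, rfl | rfl⟩
      · exact ⟨b, hab, rfl⟩
      · exact ⟨a, hab.symm, Sym2.eq_swap⟩
    · rintro ⟨w, hw, he⟩
      rcases Sym2.eq_iff.mp he with ⟨rfl, rfl⟩ | ⟨rfl, rfl⟩
      · exact ⟨hw, Or.inl rfl⟩
      · exact ⟨hw.symm, Or.inr rfl⟩

theorem _root_.SimpleGraph.sum_incidenceFinset_eq_sum_neighborFinset (G : SimpleGraph V)
    [DecidableRel G.Adj] {β : Type*} [AddCommMonoid β] (f : Sym2 V → β) (v : V) :
    ∑ e ∈ G.incidenceFinset v, f e = ∑ w ∈ G.neighborFinset v, f s(v, w) := by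
  rw [G.incidenceFinset_eq_image_neighborFinset]
  exact sum_image fun a _ b _ h => Sym2.congr_right.mp h

section Profile

variable {G : SimpleGraph V} [DecidableRel G.Adj] {c : V → ℝ} {M M' : Finset V}
  {r r' : V → V → ℝ}

theorem ValidProfile.ransom_self_eq_zero (h : ValidProfile G c M r) (v : V) : r v v = 0 :=
  h.2.1 v v (Or.inr (G.irrefl))

theorem ValidProfile.demand_nonneg (h : ValidProfile G c M r) (v : V) : 0 ≤ demand M r v :=
  sum_nonneg fun u _ => h.1 u v

theorem demand_eq_of_deviation {v : V} (hdev : Deviation v M M' r r') (hr : r v v = 0)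
    (hr' : r' v v = 0) : demand M' r' v = demand M r v := by
  have herase : M'.erase v = M.erase v := by
    ext u
    simp only [mem_erase, and_congr_right_iff]
    exact hdev.1 u
  unfold demand
  rw [← sum_erase (f := fun u => r' u v) M' hr', ← sum_erase (f := fun u => r u v) M hr, herase]
  exact sum_congr rfl fun u hu => hdev.2 u v (mem_erase.mp hu).1

theorem utility_le_neg_min_demand {T : ℝ} (hT : 0 ≤ T) (h : ValidProfile G c M r) (v : V) :
    utility G c T M r v ≤ -min (demand M r v) (c v) := by
  unfold utility
  split_ifs with hv hciv
  · have hcollected : ∑ u ∈ G.neighborFinset v,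
        (if u ∈ M ∧ c u < demand M r u then (c u / demand M r u) * r v u else r v u)
        ≤ ∑ u ∈ G.neighborFinset v, r v u := by
      refine sum_le_sum fun u _ => ?_
      split_ifs with hprot
      · exact mul_le_of_le_one_left (h.1 v u)
          (div_le_one_of_le₀ hprot.2.le (h.demand_nonneg u))
      · exact le_rfl
    linarith [h.2.2 v hv]
  · linarith [min_le_left (demand M r v) (c v)]
  · linarith [min_le_left (demand M r v) (c v)]

theorem utility_eq_neg_demand {T : ℝ} (h : ValidProfile G c M r)
    (hcover : ∀ ⦃u w : V⦄, G.Adj u w → u ∈ M ∨ w ∈ M) (hdemand : ∀ u, demand M r u ≤ c u)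
    (v : V) : utility G c T M r v = -demand M r v := by
  unfold utility
  split_ifs with hv hciv
  · have hunprotected : ∀ u ∈ G.neighborFinset v,
        (if u ∈ M ∧ c u < demand M r u then (c u / demand M r u) * r v u else r v u) = r v u :=
      fun u _ => if_neg fun hprot => (hdemand u).not_gt hprot.2
    rw [sum_congr rfl hunprotected, h.2.2 v hv, min_eq_left (hdemand v)]
    ring
  · obtain ⟨u, hu, huM⟩ := hciv
    exact (huM ((hcover ((G.mem_neighborFinset v u).mp hu)).resolve_left hv)).elim
  · ring

end Profile

section Dual

variable {G : SimpleGraph V} [DecidableRel G.Adj] {M : Finset V} {y : Sym2 V → ℝ}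

variable (G M y) in
def dualRansom : V → V → ℝ := fun u w => if u ∈ M ∧ G.Adj u w then y s(u, w) else 0

theorem demand_dualRansom_le (hy0 : ∀ e, 0 ≤ y e) (v : V) :
    demand M (dualRansom G M y) v ≤ ∑ e ∈ G.incidenceFinset v, y e := by
  have hterm : ∀ u ∈ M, dualRansom G M y u v = if G.Adj v u then y s(v, u) else 0 := by
    intro u hu
    simp only [dualRansom, hu, true_and, G.adj_comm u v, Sym2.eq_swap]
  calc demand M (dualRansom G M y) v = ∑ u ∈ M.filter (G.Adj v), y s(v, u) := by
        rw [demand, sum_congr rfl hterm, sum_filter]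
    _ ≤ ∑ u ∈ G.neighborFinset v, y s(v, u) :=
        sum_le_sum_of_subset_of_nonneg (fun u hu => (G.mem_neighborFinset v u).mpr
          (mem_filter.mp hu).2) fun _ _ _ => hy0 _
    _ = ∑ e ∈ G.incidenceFinset v, y e := (G.sum_incidenceFinset_eq_sum_neighborFinset y v).symm

theorem validProfile_dualRansom {c : V → ℝ} (hy0 : ∀ e, 0 ≤ y e)
    (htight : ∀ v ∈ M, ∑ e ∈ G.incidenceFinset v, y e = c v) :
    ValidProfile G c M (dualRansom G M y) := by
  refine ⟨fun u w => ?_, fun u w h => ?_, fun u hu => ?_⟩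
  · unfold dualRansom
    split_ifs
    exacts [hy0 _, le_rfl]
  · exact if_neg fun hMadj => h.elim (· hMadj.1) (· hMadj.2)
  · rw [← htight u hu, G.sum_incidenceFinset_eq_sum_neighborFinset]
    exact sum_congr rfl fun w hw => if_pos ⟨hu, (G.mem_neighborFinset u w).mp hw⟩

end Dual

/-- a complementary pair `(M, y)` yields a pure Nash equilibrium of the Mafia
Vertex Cover Game where `M` is the Mafia and each mafioso `u` demands `r(u,w) = y(uw)` from
every neighbor `w`. -/
theorem stmt_2 (G : SimpleGraph V) [DecidableRel G.Adj] (c : V → ℝ)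
    (hc : ∀ v, 0 ≤ c v) (T : ℝ) (hT : 2 * ∑ v, c v < T)
    (M : Finset V) (y : Sym2 V → ℝ)
    (hcover : ∀ ⦃u w : V⦄, G.Adj u w → u ∈ M ∨ w ∈ M)
    (hy0 : ∀ e, 0 ≤ y e)
    (hyfeas : ∀ v : V, ∑ e ∈ G.edgeFinset.filter (fun e => v ∈ e), y e ≤ c v)
    (htight : ∀ v ∈ M, ∑ e ∈ G.edgeFinset.filter (fun e => v ∈ e), y e = c v) :
    IsNashEq G c T M (fun u w => if u ∈ M ∧ G.Adj u w then y s(u, w) else 0) := by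
  show IsNashEq G c T M (dualRansom G M y)
  simp only [← G.incidenceFinset_eq_filter] at hyfeas htight
  have hT0 : 0 ≤ T := by linarith [sum_nonneg fun v (_ : v ∈ univ) => hc v]
  have hdemand : ∀ v, demand M (dualRansom G M y) v ≤ c v :=
    fun v => (demand_dualRansom_le hy0 v).trans (hyfeas v)
  have hvalid : ValidProfile G c M (dualRansom G M y) := validProfile_dualRansom hy0 htight
  refine ⟨hvalid, fun v M' r' hvalid' hdev => ?_⟩
  calc utility G c T M' r' v ≤ -min (demand M' r' v) (c v) := utility_le_neg_min_demand hT0 hvalid' v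
    _ = -demand M (dualRansom G M y) v := by
        rw [demand_eq_of_deviation hdev (hvalid.ransom_self_eq_zero v)
          (hvalid'.ransom_self_eq_zero v), min_eq_left (hdemand v)]
    _ = utility G c T M (dualRansom G M y) v :=
        (utility_eq_neg_demand hvalid hcover hdemand v).symm

end
end MafiaVC
end

section
/- Let the strategy profile (M, r) of the Mafia Vertex Cover Game be a pure Nash equilibrium. Then there are no protected mafiosi, i.e., D(v) ≤ c(v) for every v ∈ M. -/
/-!
A mafioso `u` paying ransom to a protected mafioso `v` gets back only the fraction
`c v / D v < 1` of it. In an equilibrium `u` therefore has no civilian neighbour (he would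
rather shift that ransom to one, who pays in full), so `u` could turn civilian without penalty
for utility `-D u`; as a mafioso he collects less than `c u`, so this deviation pays off unless
`D u > c u`. Thus the protected mafiosi receive ransom only from one another, whence
`∑_P D ≤ ∑_P c`, contradicting `D > c` on a nonempty set `P` of protected mafiosi.
-/

open Finset
open scoped Classical

namespace MafiaVC

section Valid

variable {V : Type*} [Fintype V] {G : SimpleGraph V} [DecidableRel G.Adj] {c : V → ℝ}
  {M : Finset V} {r : V → V → ℝ} {u w : V}

namespace ValidProfile

lemma mem_of_pos (h : ValidProfile G c M r) (hr : 0 < r u w) : u ∈ M := by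
  by_contra hu
  exact hr.ne' (h.2.1 u w (Or.inl hu))

lemma adj_of_pos (h : ValidProfile G c M r) (hr : 0 < r u w) : G.Adj u w := by
  by_contra hadj
  exact hr.ne' (h.2.1 u w (Or.inr hadj))

lemma cost_nonneg (h : ValidProfile G c M r) (hu : u ∈ M) : 0 ≤ c u :=
  h.2.2 u hu ▸ sum_nonneg fun w _ => h.1 u w

lemma sum_le_cost (h : ValidProfile G c M r) (hu : u ∈ M) (S : Finset V) :
    ∑ w ∈ S, r u w ≤ c u :=
  calc ∑ w ∈ S, r u w = ∑ w ∈ S.filter (G.Adj u), r u w :=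
        (sum_filter_of_ne fun w _ hw => by_contra fun hadj => hw (h.2.1 u w (Or.inr hadj))).symm
    _ ≤ ∑ w ∈ G.neighborFinset u, r u w :=
        sum_le_sum_of_subset_of_nonneg (fun w hw => by simpa using (mem_filter.1 hw).2)
          fun w _ _ => h.1 u w
    _ = c u := h.2.2 u hu

lemma sum_demand_le (h : ValidProfile G c M r) {P : Finset V} (hPM : P ⊆ M)
    (hP : ∀ v ∈ P, ∀ u, 0 < r u v → u ∈ P) :
    ∑ v ∈ P, demand M r v ≤ ∑ u ∈ P, c u := by
  have houtside : ∀ u ∈ M, u ∉ P → ∑ v ∈ P, r u v = 0 := fun u _ huP =>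
    sum_eq_zero fun v hv => ((h.1 u v).eq_or_lt.resolve_right fun hr => huP (hP v hv u hr)).symm
  calc ∑ v ∈ P, demand M r v = ∑ u ∈ M, ∑ v ∈ P, r u v := sum_comm
    _ = ∑ u ∈ P, ∑ v ∈ P, r u v := (sum_subset hPM houtside).symm
    _ ≤ ∑ u ∈ P, c u := sum_le_sum fun u hu => h.sum_le_cost (hPM hu) P

end ValidProfile

end Valid

section Deviations

variable {V : Type*} [DecidableEq V] {M : Finset V} {r : V → V → ℝ} {u v w x y : V}

/-- The part of the ransom `r v u` that `v` actually collects: `F⁺(v)` is the sum of these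
over the neighbours `u` of `v`. -/
noncomputable def collected (c : V → ℝ) (M : Finset V) (r : V → V → ℝ) (v u : V) : ℝ :=
  if u ∈ M ∧ c u < demand M r u then (c u / demand M r u) * r v u else r v u

def shiftRansom (r : V → V → ℝ) (u v w : V) : V → V → ℝ :=
  Function.update r u fun y => r u y + (if y = w then r u v else 0) - (if y = v then r u v else 0)

lemma shiftRansom_of_ne (hx : x ≠ u) (y : V) : shiftRansom r u v w x y = r x y := by
  rw [shiftRansom, Function.update_of_ne hx]

lemma shiftRansom_self (y : V) :
    shiftRansom r u v w u y =
      r u y + (if y = w then r u v else 0) - (if y = v then r u v else 0) := by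
  rw [shiftRansom, Function.update_self]

lemma deviation_shiftRansom : Deviation u M M r (shiftRansom r u v w) :=
  ⟨fun _ _ => Iff.rfl, fun _ _ hx => shiftRansom_of_ne hx _⟩

lemma demand_shiftRansom (hyv : y ≠ v) (hyw : y ≠ w) :
    demand M (shiftRansom r u v w) y = demand M r y := by
  refine sum_congr rfl fun x _ => ?_
  rcases eq_or_ne x u with rfl | hx
  · simp [shiftRansom_self, hyv, hyw]
  · exact shiftRansom_of_ne hx y

lemma deviation_resign : Deviation u M (M.erase u) r (Function.update r u 0) :=
  ⟨fun _ hx => by simp [hx], fun _ _ hx => by rw [Function.update_of_ne hx]⟩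

lemma demand_resign (hr : r u u = 0) :
    demand (M.erase u) (Function.update r u 0) u = demand M r u := by
  rw [demand, sum_congr rfl fun x hx => by rw [Function.update_of_ne (mem_erase.1 hx).1]]
  exact sum_erase M hr

end Deviations

section Utility

variable {V : Type*} [Fintype V] [DecidableEq V] {G : SimpleGraph V} [DecidableRel G.Adj]
  {c : V → ℝ} {T : ℝ} {M : Finset V} {r : V → V → ℝ} {u v w : V}

lemma utility_of_mem (hu : u ∈ M) :
    utility G c T M r u =
      -c u + ∑ y ∈ G.neighborFinset u, collected c M r u y - min (demand M r u) (c u) := by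
  rw [utility, if_pos hu]
  rfl

lemma ValidProfile.collected_le (h : ValidProfile G c M r) (v u : V) :
    collected c M r v u ≤ r v u := by
  unfold collected
  split_ifs with hu
  · have hD : 0 < demand M r u := (h.cost_nonneg hu.1).trans_lt hu.2
    exact mul_le_of_le_one_left (h.1 v u) ((div_le_one hD).2 hu.2.le)
  · exact le_rfl

lemma ValidProfile.collected_lt (h : ValidProfile G c M r) (hu : u ∈ M ∧ c u < demand M r u)
    (hr : 0 < r v u) : collected c M r v u < r v u := by
  have hD : 0 < demand M r u := (h.cost_nonneg hu.1).trans_lt hu.2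
  rw [collected, if_pos hu]
  exact mul_lt_of_lt_one_left hr ((div_lt_one hD).2 hu.2)

lemma ValidProfile.shiftRansom (h : ValidProfile G c M r) (hvw : v ≠ w) (hv : G.Adj u v)
    (hw : G.Adj u w) : ValidProfile G c M (shiftRansom r u v w) := by
  refine ⟨fun x y => ?_, fun x y hxy => ?_, fun x hxM => ?_⟩
  · rcases eq_or_ne x u with rfl | hx
    · rw [shiftRansom_self]
      by_cases hyv : y = v
      · subst hyv; simp [hvw]
      · have := h.1 x v; have := h.1 x y; split_ifs <;> linarith
    · rw [shiftRansom_of_ne hx]; exact h.1 x y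
  · rcases eq_or_ne x u with rfl | hx
    · rcases hxy with hxM | hadj
      · simp [shiftRansom_self, h.2.1 x _ (Or.inl hxM)]
      · have hyv : y ≠ v := fun hyv => hadj (hyv ▸ hv)
        have hyw : y ≠ w := fun hyw => hadj (hyw ▸ hw)
        simp [shiftRansom_self, hyv, hyw, h.2.1 x y (Or.inr hadj)]
    · rw [shiftRansom_of_ne hx]; exact h.2.1 x y hxy
  · rcases eq_or_ne x u with rfl | hx
    · simp only [shiftRansom_self, sum_sub_distrib, sum_add_distrib, sum_ite_eq',
        G.mem_neighborFinset, hv, hw, if_true, h.2.2 x hxM]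
      ring
    · simp only [shiftRansom_of_ne hx]; exact h.2.2 x hxM

lemma utility_shiftRansom (hu : u ∈ M) (hvw : v ≠ w) (hv : G.Adj u v) (hw : G.Adj u w)
    (hwM : w ∉ M) :
    utility G c T M (shiftRansom r u v w) u =
      utility G c T M r u + r u v - collected c M r u v := by
  have hterm : ∀ y ∈ G.neighborFinset u, collected c M (shiftRansom r u v w) u y =
      collected c M r u y + (if y = w then r u v else 0)
        - (if y = v then collected c M r u v else 0) := by
    intro y _
    by_cases hyv : y = v
    · subst hyv
      simp [collected, shiftRansom_self, hvw]
    by_cases hyw : y = w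
    · subst hyw
      simp [collected, shiftRansom_self, hwM, hyv]
    · simp [collected, shiftRansom_self, demand_shiftRansom hyv hyw, hyv, hyw]
  rw [utility_of_mem hu, utility_of_mem hu, sum_congr rfl hterm,
    sum_sub_distrib, sum_add_distrib, sum_ite_eq', sum_ite_eq', if_pos (by simpa using hw),
    if_pos (by simpa using hv), demand_shiftRansom hv.ne hw.ne]
  ring

lemma ValidProfile.resign (h : ValidProfile G c M r) (u : V) :
    ValidProfile G c (M.erase u) (Function.update r u 0) := by
  refine ⟨fun x y => ?_, fun x y hxy => ?_, fun x hx => ?_⟩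
  · rcases eq_or_ne x u with rfl | hx
    · simp
    · rw [Function.update_of_ne hx]; exact h.1 x y
  · rcases eq_or_ne x u with rfl | hx
    · simp
    · rw [Function.update_of_ne hx]
      exact h.2.1 x y (hxy.imp_left fun hxM hx' => hxM (mem_erase.2 ⟨hx, hx'⟩))
  · obtain ⟨hxu, hxM⟩ := mem_erase.1 hx
    simp only [Function.update_of_ne hxu]
    exact h.2.2 x hxM

lemma utility_resign (h : ValidProfile G c M r) (hN : ∀ w, G.Adj u w → w ∈ M) :
    utility G c T (M.erase u) (Function.update r u 0) u = -demand M r u := by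
  have hcovered : ¬ ∃ w ∈ G.neighborFinset u, w ∉ M.erase u := by
    rintro ⟨w, hw, hwM⟩
    rw [SimpleGraph.mem_neighborFinset] at hw
    exact hwM (mem_erase.2 ⟨hw.ne', hN w hw⟩)
  rw [utility, if_neg (notMem_erase u M), demand_resign (h.2.1 u u (Or.inr G.irrefl)),
    if_neg hcovered, sub_zero]

lemma IsNashEq.neighbors_mem_of_pays_protected (h : IsNashEq G c T M r)
    (hv : v ∈ M ∧ c v < demand M r v) (hr : 0 < r u v) (hw : G.Adj u w) : w ∈ M := by
  by_contra hwM
  have hvw : v ≠ w := fun hvw => hwM (hvw ▸ hv.1)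
  have hu := h.1.mem_of_pos hr
  have huv := h.1.adj_of_pos hr
  have hdev := h.2 u M _ (h.1.shiftRansom hvw huv hw) deviation_shiftRansom
  rw [utility_shiftRansom hu hvw huv hw hwM] at hdev
  linarith [h.1.collected_lt hv hr]

lemma IsNashEq.protected_of_pays_protected (h : IsNashEq G c T M r)
    (hv : v ∈ M ∧ c v < demand M r v) (hr : 0 < r u v) : u ∈ M ∧ c u < demand M r u := by
  have hu := h.1.mem_of_pos hr
  refine ⟨hu, lt_of_not_ge fun hDu => ?_⟩
  have hvN : v ∈ G.neighborFinset u := by simpa using h.1.adj_of_pos hr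
  have hdev := h.2 u _ _ (h.1.resign u) deviation_resign
  rw [utility_resign h.1 fun w hw => h.neighbors_mem_of_pays_protected hv hr hw,
    utility_of_mem hu, min_eq_left hDu] at hdev
  have hcollected : ∑ y ∈ G.neighborFinset u, collected c M r u y < c u :=
    calc ∑ y ∈ G.neighborFinset u, collected c M r u y
        < ∑ y ∈ G.neighborFinset u, r u y :=
          sum_lt_sum (fun y _ => h.1.collected_le u y) ⟨v, hvN, h.1.collected_lt hv hr⟩
      _ = c u := h.1.2.2 u hu
  linarith

end Utility

variable {V : Type*} [Fintype V] [DecidableEq V]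

theorem stmt_5_general (G : SimpleGraph V) [DecidableRel G.Adj] (c : V → ℝ) (T : ℝ)
    (M : Finset V) (r : V → V → ℝ)
    (hnash : IsNashEq G c T M r) :
    ∀ v ∈ M, demand M r v ≤ c v := by
  by_contra! ⟨v, hvM, hv⟩
  set P := M.filter fun u => c u < demand M r u
  have hclosed : ∀ v ∈ P, ∀ u, 0 < r u v → u ∈ P := fun v hv u hr =>
    mem_filter.2 (hnash.protected_of_pays_protected (mem_filter.1 hv) hr)
  have hlt : ∑ u ∈ P, c u < ∑ u ∈ P, demand M r u :=
    sum_lt_sum_of_nonempty ⟨v, mem_filter.2 ⟨hvM, hv⟩⟩ fun u hu => (mem_filter.1 hu).2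
  exact (hnash.1.sum_demand_le (filter_subset _ M) hclosed).not_gt hlt

/-- in any pure Nash equilibrium `(M, r)` of the Mafia Vertex Cover Game there
are no protected mafiosi, i.e. `D v ≤ c v` for every mafioso `v`. -/
theorem stmt_5 (G : SimpleGraph V) [DecidableRel G.Adj] (c : V → ℝ)
    (hc : ∀ v, 0 ≤ c v) (T : ℝ) (hT : 2 * ∑ v, c v < T)
    (M : Finset V) (r : V → V → ℝ)
    (hnash : IsNashEq G c T M r) :
    ∀ v ∈ M, demand M r v ≤ c v :=
  stmt_5_general G c T M r hnash

end MafiaVC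
end

section
/- Let the strategy profile (M, r) of the Mafia Vertex Cover Game be a pure Nash equilibrium and let v be a civilian (v ∈ V∖M). Then D(v) ≤ 2·c(v). -/
open Finset
open scoped Classical

namespace MafiaVC

variable {V : Type*} [Fintype V] [DecidableEq V]

noncomputable section

/-!
A civilian `v` with `D(v) > 2 c(v) ≥ 0` is charged by some mafioso neighbor `u`. He can deviate
by joining the mafia and demanding his whole cost `c(v)` from `u`: as a mafioso his income `F⁺`
is nonnegative and he loses at most `c(v) + F⁻(v) ≤ 2 c(v)`. As a civilian he gets at most
`-D(v)`, the penalty being nonnegative, so the equilibrium condition forces `D(v) ≤ 2 c(v)`.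
-/

theorem utility_le_neg_demand_of_not_mem (G : SimpleGraph V) [DecidableRel G.Adj] (c : V → ℝ)
    {T : ℝ} (hT : 0 ≤ T) {M : Finset V} (r : V → V → ℝ) {v : V} (hv : v ∉ M) :
    utility G c T M r v ≤ -demand M r v := by
  rw [utility, if_neg hv]
  split_ifs <;> linarith

theorem neg_two_mul_le_utility_of_mem {G : SimpleGraph V} [DecidableRel G.Adj] {c : V → ℝ}
    (hc : ∀ v, 0 ≤ c v) (T : ℝ) {M : Finset V} {r : V → V → ℝ} (hr : ValidProfile G c M r)
    {v : V} (hv : v ∈ M) :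
    -2 * c v ≤ utility G c T M r v := by
  have hincome : 0 ≤ ∑ u ∈ G.neighborFinset v,
      if u ∈ M ∧ c u < demand M r u then (c u / demand M r u) * r v u else r v u := by
    refine sum_nonneg fun u _ => ?_
    split_ifs with hprot
    · exact mul_nonneg (div_nonneg (hc u) ((hc u).trans hprot.2.le)) (hr.1 v u)
    · exact hr.1 v u
  rw [utility, if_pos hv]
  linarith [min_le_right (demand M r v) (c v)]

omit [DecidableEq V] in
theorem exists_adj_of_demand_pos {G : SimpleGraph V} [DecidableRel G.Adj] {c : V → ℝ}
    {M : Finset V} {r : V → V → ℝ} (hr : ValidProfile G c M r) {v : V}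
    (hD : 0 < demand M r v) : ∃ u, G.Adj v u := by
  obtain ⟨u, huM, hru⟩ := exists_ne_zero_of_sum_ne_zero hD.ne'
  refine ⟨u, G.adj_symm ?_⟩
  by_contra hadj
  exact hru (hr.2.1 u v (Or.inr hadj))

omit [Fintype V] in
theorem deviation_insert_update (v : V) (M : Finset V) (r : V → V → ℝ) (f : V → ℝ) :
    Deviation v M (insert v M) r (Function.update r v f) :=
  ⟨fun _ hu => by simp [hu], fun _ _ hu => by simp [hu]⟩

theorem ValidProfile.insert_update_single {G : SimpleGraph V} [DecidableRel G.Adj] {c : V → ℝ}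
    {M : Finset V} {r : V → V → ℝ} (hr : ValidProfile G c M r) {u v : V} (hcv : 0 ≤ c v)
    (huv : G.Adj v u) :
    ValidProfile G c (insert v M) (Function.update r v (Pi.single u (c v))) := by
  obtain ⟨hnonneg, hzero, hsum⟩ := hr
  refine ⟨fun a b => ?_, fun a b hab => ?_, fun a ha => ?_⟩
  · rcases eq_or_ne a v with rfl | hav
    · rcases eq_or_ne b u with rfl | hbu <;> simp [*]
    · simpa [hav] using hnonneg a b
  · rcases eq_or_ne a v with rfl | hav
    · have hbu : b ≠ u := by
        rintro rfl
        simp_all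
      simp [hbu]
    · simp only [Function.update_of_ne hav]
      exact hzero a b (hab.imp_left fun h hM => h (mem_insert_of_mem hM))
  · rcases eq_or_ne a v with rfl | hav
    · simp [Pi.single_apply, (G.mem_neighborFinset a u).2 huv]
    · simpa [hav] using hsum a ((mem_insert.1 ha).resolve_left hav)

theorem IsNashEq.neg_two_mul_le_utility {G : SimpleGraph V} [DecidableRel G.Adj] {c : V → ℝ}
    (hc : ∀ v, 0 ≤ c v) {T : ℝ} {M : Finset V} {r : V → V → ℝ} (hnash : IsNashEq G c T M r)
    {u v : V} (huv : G.Adj v u) :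
    -2 * c v ≤ utility G c T M r v :=
  have hvalid := hnash.1.insert_update_single (hc v) huv
  (neg_two_mul_le_utility_of_mem hc T hvalid (mem_insert_self v M)).trans
    (hnash.2 v _ _ hvalid (deviation_insert_update v M r _))

/-- in any pure Nash equilibrium `(M, r)` of the Mafia Vertex Cover Game, every
civilian `v` satisfies `D v ≤ 2 c v`. -/
theorem stmt_6 (G : SimpleGraph V) [DecidableRel G.Adj] (c : V → ℝ)
    (hc : ∀ v, 0 ≤ c v) (T : ℝ) (hT : 2 * ∑ v, c v < T)
    (M : Finset V) (r : V → V → ℝ)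
    (hnash : IsNashEq G c T M r)
    (v : V) (hv : v ∉ M) :
    demand M r v ≤ 2 * c v := by
  by_contra! hD
  obtain ⟨u, huv⟩ := exists_adj_of_demand_pos hnash.1 (by linarith [hc v])
  have hT0 : 0 ≤ T := by linarith [sum_nonneg fun w (_ : w ∈ univ) => hc w]
  linarith [hnash.neg_two_mul_le_utility hc huv, utility_le_neg_demand_of_not_mem G c hT0 r hv]

end
end MafiaVC
end

section
/- Suppose the strategy profile (M, r) of the Mafia Vertex Cover Game satisfies D(u) ≤ c(u) for every u ∈ V and r(u,w) = r(w,u) whenever u, w ∈ M. Let v be a civilian incident to at least one uncovered edge (an edge both of whose endpoints are civilians) such that c(v) − D(v) ≤ c(u) − D(u) for every civilian u incident to an uncovered edge. Let v change his strategy by joining the Mafia with any nonnegative ransom vector r' satisfying r'(v,u) = r(u,v) for every mafioso neighbor u of v, r'(v,z) = 0 for mafioso non-neighbors, r'(v,z) ≥ 0 arbitrary on civilian neighbors, and ∑_{w : vw∈E} r'(v,w) = c(v). Then: (i) in the resulting profile the demands D'(u) satisfy D'(u) ≤ c(u) for every u ∈ V, and ransoms between mafiosi remain symmetric; (ii) this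 move is a best response of v with respect to the lexicographic utility (U, Ũ): v attains U(v) = −D(v) and Ũ(v) = 0, and no strategy of v yields a lexicographically larger pair. -/
/-!
The mirrored ransoms keep every demand within budget: a mafioso neighbor `u` receives from
his mafioso neighbors exactly what he pays them, and the new ransom `r u v` is one more
payment out of `c u`; a civilian neighbor `u` is charged at most the slack `c v - D v`, which
the minimality of `v` bounds by `c u - D u`. With no protected neighbor, `v` then collects
all of `c v` and loses `D v`. No deviation does better: as a civilian `v` pays the penalty
on top of `D v`, as a mafioso he collects at most `c v` and loses `min (D v) (c v) = D v`.
-/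

open Finset
open scoped Classical

namespace MafiaVC

variable {V : Type*} [Fintype V] [DecidableEq V]

noncomputable section

/-- The secondary utility `Ũ(v)`: zero for civilians, and
`-∑_{u∈N(v)∩M} |r(u,v) - r(v,u)|` for a mafioso `v`. -/
def utility2 (G : SimpleGraph V) [DecidableRel G.Adj]
    (M : Finset V) (r : V → V → ℝ) (v : V) : ℝ :=
  if v ∈ M then -∑ u ∈ G.neighborFinset v ∩ M, |r u v - r v u| else 0

section Lemmas

variable {G : SimpleGraph V} [DecidableRel G.Adj] {c : V → ℝ} {M : Finset V} {r : V → V → ℝ}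

namespace ValidProfile

omit [DecidableEq V] in
theorem demand_nonneg_s8 (h : ValidProfile G c M r) (u : V) : 0 ≤ demand M r u :=
  Finset.sum_nonneg fun w _ => h.1 w u

omit [DecidableEq V] in
theorem self_eq_zero (h : ValidProfile G c M r) (u : V) : r u u = 0 :=
  h.2.1 u u (Or.inr (G.loopless.irrefl u))

theorem demand_eq_sum_neighborFinset_inter (h : ValidProfile G c M r) (v : V) :
    demand M r v = ∑ w ∈ G.neighborFinset v ∩ M, r w v := by
  refine (Finset.sum_subset Finset.inter_subset_right fun w hwM hw => ?_).symm
  refine h.2.1 w v (Or.inr fun hadj => hw ?_)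
  exact Finset.mem_inter.mpr ⟨(G.mem_neighborFinset v w).mpr hadj.symm, hwM⟩

theorem add_sum_neighborFinset_inter_le (h : ValidProfile G c M r) {u v : V} {s : Finset V}
    (hu : u ∈ M) (huv : G.Adj u v) (hvs : v ∉ s) :
    r u v + ∑ w ∈ G.neighborFinset u ∩ s, r u w ≤ c u := by
  rw [← Finset.sum_insert fun hv => hvs (Finset.mem_inter.mp hv).2, ← h.2.2 u hu]
  refine Finset.sum_le_sum_of_subset_of_nonneg ?_ fun w _ _ => h.1 u w
  exact Finset.insert_subset ((G.mem_neighborFinset u v).mpr huv) Finset.inter_subset_left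

theorem demand_eq_of_deviation (h : ValidProfile G c M r) {M' : Finset V} {r' : V → V → ℝ}
    (h' : ValidProfile G c M' r') {v : V} (hdev : Deviation v M M' r r') :
    demand M' r' v = demand M r v := by
  have herase : M'.erase v = M.erase v := by
    ext u
    simp only [Finset.mem_erase]
    exact and_congr_right fun huv => hdev.1 u huv
  rw [demand, demand, ← Finset.sum_erase M' (f := (r' · v)) (h'.self_eq_zero v),
    ← Finset.sum_erase M (f := (r · v)) (h.self_eq_zero v), herase]
  exact Finset.sum_congr rfl fun u hu => hdev.2 u v (Finset.ne_of_mem_erase hu)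

theorem utility_le (h : ValidProfile G c M r) (T : ℝ) {v : V} (hv : v ∈ M) :
    utility G c T M r v ≤ -min (demand M r v) (c v) := by
  have hbonus : (∑ u ∈ G.neighborFinset v,
      if u ∈ M ∧ c u < demand M r u then (c u / demand M r u) * r v u else r v u) ≤ c v := by
    rw [← h.2.2 v hv]
    refine Finset.sum_le_sum fun u _ => ?_
    split_ifs with hprot
    · exact mul_le_of_le_one_left (h.1 v u) (div_le_one_of_le₀ hprot.2.le (h.demand_nonneg_s8 u))
    · exact le_rfl
  rw [utility, if_pos hv]
  linarith

theorem utility_eq_of_demand_le (h : ValidProfile G c M r) (T : ℝ) {v : V} (hv : v ∈ M)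
    (hdem : ∀ u, G.Adj v u → demand M r u ≤ c u) :
    utility G c T M r v = -min (demand M r v) (c v) := by
  have hbonus : (∑ u ∈ G.neighborFinset v,
      if u ∈ M ∧ c u < demand M r u then (c u / demand M r u) * r v u else r v u) = c v := by
    rw [← h.2.2 v hv]
    refine Finset.sum_congr rfl fun u hu => if_neg fun hprot => ?_
    exact (hdem u ((G.mem_neighborFinset v u).mp hu)).not_gt hprot.2
  rw [utility, if_pos hv, hbonus]
  ring

end ValidProfile

theorem utility_of_adj_notMem (T : ℝ) {u v : V} (hv : v ∉ M) (hvu : G.Adj v u) (hu : u ∉ M) :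
    utility G c T M r v = -demand M r v - T := by
  rw [utility, if_neg hv, if_pos ⟨u, (G.mem_neighborFinset v u).mpr hvu, hu⟩]

theorem utility2_nonpos (v : V) : utility2 G M r v ≤ 0 := by
  unfold utility2
  split_ifs
  · exact neg_nonpos.mpr (Finset.sum_nonneg fun u _ => abs_nonneg _)
  · exact le_rfl

theorem utility2_eq_zero (v : V) (hsymm : ∀ u ∈ M, G.Adj v u → r u v = r v u) :
    utility2 G M r v = 0 := by
  unfold utility2
  split_ifs
  · refine neg_eq_zero.mpr (Finset.sum_eq_zero fun u hu => ?_)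
    obtain ⟨hvu, huM⟩ := Finset.mem_inter.mp hu
    rw [hsymm u huM ((G.mem_neighborFinset v u).mp hvu), sub_self, abs_zero]
  · rfl

theorem utility_deviation_le (h : ValidProfile G c M r) {T : ℝ} (hT : 0 ≤ T) {u v : V}
    (hvu : G.Adj v u) (hu : u ∉ M) (hDv : demand M r v ≤ c v)
    {M' : Finset V} {r' : V → V → ℝ} (h' : ValidProfile G c M' r')
    (hdev : Deviation v M M' r r') :
    utility G c T M' r' v ≤ -demand M r v := by
  have hD := h.demand_eq_of_deviation h' hdev
  by_cases hv' : v ∈ M'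
  · simpa only [hD, min_eq_left hDv] using h'.utility_le T hv'
  · have hu' : u ∉ M' := fun hu' => hu ((hdev.1 u (G.ne_of_adj hvu).symm).mp hu')
    rw [utility_of_adj_notMem T hv' hvu hu', hD]
    linarith

end Lemmas

section Joining

variable {G : SimpleGraph V} [DecidableRel G.Adj] {c : V → ℝ} {M : Finset V}
  {r r' : V → V → ℝ} {v : V}

omit [Fintype V] in
theorem demand_insert (hv : v ∉ M) (hr'old : ∀ u w, u ≠ v → r' u w = r u w) (u : V) :
    demand (insert v M) r' u = r' v u + demand M r u := by
  rw [demand, demand, Finset.sum_insert hv]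
  exact congrArg _ (Finset.sum_congr rfl fun w hw => hr'old w u (ne_of_mem_of_not_mem hw hv))

theorem validProfile_insert (h : ValidProfile G c M r)
    (hr'old : ∀ u w, u ≠ v → r' u w = r u w) (hr'nn : ∀ w, 0 ≤ r' v w)
    (hr'zero : ∀ w, ¬ G.Adj v w → r' v w = 0)
    (hr'sum : ∑ w ∈ G.neighborFinset v, r' v w = c v) :
    ValidProfile G c (insert v M) r' := by
  refine ⟨fun u w => ?_, fun u w hnot => ?_, fun u hu => ?_⟩
  · rcases eq_or_ne u v with rfl | huv
    · exact hr'nn w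
    · exact hr'old u w huv ▸ h.1 u w
  · rcases eq_or_ne u v with rfl | huv
    · exact hr'zero w (hnot.resolve_left (not_not.mpr (Finset.mem_insert_self u M)))
    · rw [hr'old u w huv]
      exact h.2.1 u w (hnot.imp_left fun hu hu' => hu (Finset.mem_insert_of_mem hu'))
  · rcases eq_or_ne u v with rfl | huv
    · exact hr'sum
    · rw [← h.2.2 u ((Finset.mem_insert.mp hu).resolve_left huv)]
      exact Finset.sum_congr rfl fun w _ => hr'old u w huv

theorem demand_insert_le (h : ValidProfile G c M r) (hdem : ∀ u, demand M r u ≤ c u)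
    (hsym : ∀ u ∈ M, ∀ w ∈ M, r u w = r w u) (hv : v ∉ M)
    (hmin : ∀ u, u ∉ M → (∃ w, G.Adj u w ∧ w ∉ M) →
      c v - demand M r v ≤ c u - demand M r u)
    (hr'old : ∀ u w, u ≠ v → r' u w = r u w) (hr'nn : ∀ w, 0 ≤ r' v w)
    (hr'maf : ∀ u ∈ M, G.Adj v u → r' v u = r u v)
    (hr'zero : ∀ w, ¬ G.Adj v w → r' v w = 0)
    (hr'sum : ∑ w ∈ G.neighborFinset v, r' v w = c v) (u : V) :
    demand (insert v M) r' u ≤ c u := by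
  rw [demand_insert hv hr'old]
  by_cases hvu : G.Adj v u
  swap
  · simpa only [hr'zero u hvu, zero_add] using hdem u
  by_cases huM : u ∈ M
  · have hDu : demand M r u = ∑ w ∈ G.neighborFinset u ∩ M, r u w := by
      rw [h.demand_eq_sum_neighborFinset_inter u]
      exact Finset.sum_congr rfl fun w hw => hsym w (Finset.mem_inter.mp hw).2 u huM
    rw [hr'maf u huM hvu, hDu]
    exact h.add_sum_neighborFinset_inter_le huM hvu.symm hv
  · have hmirror : ∑ w ∈ G.neighborFinset v ∩ M, r' v w = demand M r v := by
      rw [h.demand_eq_sum_neighborFinset_inter v]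
      refine Finset.sum_congr rfl fun w hw => ?_
      obtain ⟨hvw, hwM⟩ := Finset.mem_inter.mp hw
      exact hr'maf w hwM ((G.mem_neighborFinset v w).mp hvw)
    have hslack := (validProfile_insert h hr'old hr'nn hr'zero hr'sum).add_sum_neighborFinset_inter_le
      (Finset.mem_insert_self v M) hvu huM
    have := hmin u huM ⟨v, hvu.symm, hv⟩
    linarith

theorem symm_insert (h : ValidProfile G c M r) (hsym : ∀ u ∈ M, ∀ w ∈ M, r u w = r w u)
    (hv : v ∉ M) (hr'old : ∀ u w, u ≠ v → r' u w = r u w)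
    (hr'maf : ∀ u ∈ M, G.Adj v u → r' v u = r u v)
    (hr'zero : ∀ w, ¬ G.Adj v w → r' v w = 0) :
    ∀ u ∈ insert v M, ∀ w ∈ insert v M, r' u w = r' w u := by
  have hv_symm : ∀ w ∈ M, r' v w = r' w v := by
    intro w hw
    rw [hr'old w v (ne_of_mem_of_not_mem hw hv)]
    by_cases hvw : G.Adj v w
    · exact hr'maf w hw hvw
    · rw [hr'zero w hvw, h.2.1 w v (Or.inr fun hwv => hvw hwv.symm)]
  intro u hu w hw
  rcases Finset.mem_insert.mp hu with rfl | huM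
  · rcases Finset.mem_insert.mp hw with rfl | hwM
    · rfl
    · exact hv_symm w hwM
  · rcases Finset.mem_insert.mp hw with rfl | hwM
    · exact (hv_symm u huM).symm
    · rw [hr'old u w (ne_of_mem_of_not_mem huM hv), hr'old w u (ne_of_mem_of_not_mem hwM hv)]
      exact hsym u huM w hwM

end Joining

theorem stmt_8_general (G : SimpleGraph V) [DecidableRel G.Adj] (c : V → ℝ)
    (T : ℝ) (hT : 2 * ∑ v, c v < T)
    (M : Finset V) (r : V → V → ℝ)
    (hvalid : ValidProfile G c M r)
    (hdem : ∀ u, demand M r u ≤ c u)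
    (hsym : ∀ u ∈ M, ∀ w ∈ M, r u w = r w u)
    (v : V) (hv : v ∉ M)
    (hunc : ∃ u, G.Adj v u ∧ u ∉ M)
    (hmin : ∀ u, u ∉ M → (∃ w, G.Adj u w ∧ w ∉ M) →
      c v - demand M r v ≤ c u - demand M r u)
    (r' : V → V → ℝ)
    (hr'old : ∀ u w, u ≠ v → r' u w = r u w)
    (hr'nn : ∀ w, 0 ≤ r' v w)
    (hr'maf : ∀ u ∈ M, G.Adj v u → r' v u = r u v)
    (hr'zero : ∀ w, ¬ G.Adj v w → r' v w = 0)
    (hr'sum : ∑ w ∈ G.neighborFinset v, r' v w = c v) :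
    ((∀ u, demand (insert v M) r' u ≤ c u) ∧
        ∀ u ∈ insert v M, ∀ w ∈ insert v M, r' u w = r' w u) ∧
      (utility G c T (insert v M) r' v = -demand M r v ∧
        utility2 G (insert v M) r' v = 0 ∧
        ∀ (M'' : Finset V) (r'' : V → V → ℝ),
          ValidProfile G c M'' r'' → Deviation v M M'' r r'' →
            utility G c T M'' r'' v < utility G c T (insert v M) r' v ∨
              (utility G c T M'' r'' v = utility G c T (insert v M) r' v ∧
                utility2 G M'' r'' v ≤ utility2 G (insert v M) r' v)) := by
  obtain ⟨u, hvu, hu⟩ := hunc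
  have hT0 : 0 ≤ T := by
    have := Finset.sum_nonneg fun w (_ : w ∈ Finset.univ) => (hvalid.demand_nonneg_s8 w).trans (hdem w)
    linarith
  have hvalid' := validProfile_insert hvalid hr'old hr'nn hr'zero hr'sum
  have hdem' := demand_insert_le hvalid hdem hsym hv hmin hr'old hr'nn hr'maf hr'zero hr'sum
  have hsym' := symm_insert hvalid hsym hv hr'old hr'maf hr'zero
  have hU : utility G c T (insert v M) r' v = -demand M r v := by
    have hD : demand (insert v M) r' v = demand M r v :=
      hvalid.demand_eq_of_deviation hvalid' ⟨fun w hwv => by simp [hwv], hr'old⟩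
    rw [hvalid'.utility_eq_of_demand_le T (Finset.mem_insert_self v M) fun w _ => hdem' w, hD,
      min_eq_left (hdem v)]
  have hU2 : utility2 G (insert v M) r' v = 0 :=
    utility2_eq_zero v fun w hw _ => hsym' w hw v (Finset.mem_insert_self v M)
  refine ⟨⟨hdem', hsym'⟩, hU, hU2, fun M'' r'' hvalid'' hdev => ?_⟩
  rw [hU, hU2]
  rcases (utility_deviation_le hvalid hT0 hvu hu (hdem v) hvalid'' hdev).lt_or_eq with hlt | heq
  · exact Or.inl hlt
  · exact Or.inr ⟨heq, utility2_nonpos v⟩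

/-- suppose the profile `(M, r)` satisfies `D u ≤ c u` for every `u` and has
symmetric ransoms between mafiosi.  Let `v` be a civilian incident to an uncovered edge,
minimizing `c v - D v` among such civilians, and let `v` join the Mafia with a ransom
vector `r'` that mirrors the ransoms of his mafioso neighbors (`r'(v,u) = r(u,v)`), vanishes
on non-neighbors, is nonnegative, and sums to `c v`.  Then (i) in the new profile all
demands stay below the budgets and ransoms between mafiosi remain symmetric, and (ii) the
move is a best response for the lexicographic utility `(U, Ũ)`: `v` attains `U(v) = -D(v)`
and `Ũ(v) = 0`, and no unilateral deviation of `v` yields a lexicographically larger pair. -/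
theorem stmt_8 (G : SimpleGraph V) [DecidableRel G.Adj] (c : V → ℝ)
    (hc : ∀ v, 0 ≤ c v) (T : ℝ) (hT : 2 * ∑ v, c v < T)
    (M : Finset V) (r : V → V → ℝ)
    (hvalid : ValidProfile G c M r)
    (hdem : ∀ u, demand M r u ≤ c u)
    (hsym : ∀ u ∈ M, ∀ w ∈ M, r u w = r w u)
    (v : V) (hv : v ∉ M)
    (hunc : ∃ u, G.Adj v u ∧ u ∉ M)
    (hmin : ∀ u, u ∉ M → (∃ w, G.Adj u w ∧ w ∉ M) →
      c v - demand M r v ≤ c u - demand M r u)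
    (r' : V → V → ℝ)
    (hr'old : ∀ u w, u ≠ v → r' u w = r u w)
    (hr'nn : ∀ w, 0 ≤ r' v w)
    (hr'maf : ∀ u ∈ M, G.Adj v u → r' v u = r u v)
    (hr'zero : ∀ w, ¬ G.Adj v w → r' v w = 0)
    (hr'sum : ∑ w ∈ G.neighborFinset v, r' v w = c v) :
    ((∀ u, demand (insert v M) r' u ≤ c u) ∧
        ∀ u ∈ insert v M, ∀ w ∈ insert v M, r' u w = r' w u) ∧
      (utility G c T (insert v M) r' v = -demand M r v ∧
        utility2 G (insert v M) r' v = 0 ∧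
        ∀ (M'' : Finset V) (r'' : V → V → ℝ),
          ValidProfile G c M'' r'' → Deviation v M M'' r r'' →
            utility G c T M'' r'' v < utility G c T (insert v M) r' v ∨
              (utility G c T M'' r'' v = utility G c T (insert v M) r' v ∧
                utility2 G M'' r'' v ≤ utility2 G (insert v M) r' v)) :=
  stmt_8_general G c T hT M r hvalid hdem hsym v hv hunc hmin r' hr'old hr'nn hr'maf hr'zero hr'sum

end
end MafiaVC
end

section
/- Let (M, y) be a complementary pair for the d-uniform hypergraph (V, 𝓔) with costs c. Define the strategy profile of the Mafia Hitting Set Game in which M is the set of mafiosi, C = V∖M are civilians, and each mafioso m sets ransoms r(m,S) = y(S) for every club S containing m. Then this strategy profile is a pure Nash equilibrium. -/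
/-!
The dual ransoms leave nobody protected: a club `S ∋ v` has at most `d - 1` other mafiosi, each
asking `y S`, so `D v ≤ ∑_{S ∋ v} y S ≤ c v` by dual feasibility. With no protected agents,
tightness makes every mafioso's income equal to his cost, and since the mafia is a hitting set no
civilian is penalised, so everybody's utility is `-D v`. A deviation cannot change `D v`; a
deviating mafioso earns back at most his cost, because a protected neighbour `u` contributes
`c u / D u < 1` where an unprotected one contributes `1`; a deviating civilian can only add
the penalty.
-/

open Finset
open scoped Classical

namespace MafiaHS

variable {V : Type*} [Fintype V] [DecidableEq V]

noncomputable section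

/-- The demand `D(v) = (1/(d-1)) ∑_{S ∋ v} ∑_{m ∈ (M∩S)∖{v}} r(m,S)` asked from agent `v`
in the Mafia Hitting Set Game. -/
def demand (d : ℕ) (E : Finset (Finset V)) (M : Finset V)
    (r : V → Finset V → ℝ) (v : V) : ℝ :=
  (1 / ((d : ℝ) - 1)) * ∑ S ∈ E.filter (fun S => v ∈ S), ∑ m ∈ (M ∩ S).erase v, r m S

/-- A valid strategy profile of the Mafia Hitting Set Game: ransoms are nonnegative,
`r m S = 0` unless `m` is a mafioso belonging to the club `S ∈ 𝓔`, and every mafioso `m`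
distributes exactly `c m` among the clubs containing him. -/
def ValidProfile (E : Finset (Finset V)) (c : V → ℝ)
    (M : Finset V) (r : V → Finset V → ℝ) : Prop :=
  (∀ m S, 0 ≤ r m S) ∧
  (∀ m S, m ∉ M ∨ m ∉ S ∨ S ∉ E → r m S = 0) ∧
  (∀ m ∈ M, ∑ S ∈ E.filter (fun S => m ∈ S), r m S = c m)

/-- Utility of agent `v` in the Mafia Hitting Set Game.  A mafioso gets
`-c v + F⁺(v) - F⁻(v)` with `F⁻(v) = min(D v, c v)` and
`F⁺(v) = ∑_{S ∋ v} (r(v,S)/(d-1))·(|S∖(P∪{v})| + ∑_{u∈(S∩P)∖{v}} c u / D u)`,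
where `P = {u ∈ M : D u > c u}` is the set of protected mafiosi.
A civilian gets `-D v` minus the penalty `T` if he belongs to an uncovered club. -/
def utility (d : ℕ) (E : Finset (Finset V)) (c : V → ℝ) (T : ℝ)
    (M : Finset V) (r : V → Finset V → ℝ) (v : V) : ℝ :=
  if v ∈ M then
    -c v +
      (∑ S ∈ E.filter (fun S => v ∈ S),
        (r v S / ((d : ℝ) - 1)) *
          ((((S.filter fun u => ¬(u ∈ M ∧ c u < demand d E M r u)).erase v).card : ℝ) +
            ∑ u ∈ (S.filter fun u => u ∈ M ∧ c u < demand d E M r u).erase v,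
              c u / demand d E M r u)) -
      min (demand d E M r v) (c v)
  else
    -demand d E M r v - (if ∃ S ∈ E, v ∈ S ∧ M ∩ S = ∅ then T else 0)

/-- `(M', r')` is a unilateral deviation of agent `v` from `(M, r)`:
all other agents keep their strategies. -/
def Deviation (v : V) (M M' : Finset V) (r r' : V → Finset V → ℝ) : Prop :=
  (∀ u, u ≠ v → (u ∈ M' ↔ u ∈ M)) ∧ ∀ u S, u ≠ v → r' u S = r u S

/-- `(M, r)` is a pure Nash equilibrium of the Mafia Hitting Set Game: a valid profile such
that no agent can strictly increase his utility by a unilateral deviation. -/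
def IsNashEq (d : ℕ) (E : Finset (Finset V)) (c : V → ℝ) (T : ℝ)
    (M : Finset V) (r : V → Finset V → ℝ) : Prop :=
  ValidProfile E c M r ∧
  ∀ (v : V) (M' : Finset V) (r' : V → Finset V → ℝ),
    ValidProfile E c M' r' → Deviation v M M' r r' →
      utility d E c T M' r' v ≤ utility d E c T M r v

/-- The income `F⁺(v)` of a mafioso, as it appears in `utility`. -/
def income (d : ℕ) (E : Finset (Finset V)) (c : V → ℝ)
    (M : Finset V) (r : V → Finset V → ℝ) (v : V) : ℝ :=
  ∑ S ∈ E.filter (fun S => v ∈ S),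
    (r v S / ((d : ℝ) - 1)) *
      ((((S.filter fun u => ¬(u ∈ M ∧ c u < demand d E M r u)).erase v).card : ℝ) +
        ∑ u ∈ (S.filter fun u => u ∈ M ∧ c u < demand d E M r u).erase v,
          c u / demand d E M r u)

def dualRansom (E : Finset (Finset V)) (M : Finset V) (y : Finset V → ℝ) :
    V → Finset V → ℝ :=
  fun m S => if m ∈ M ∧ m ∈ S ∧ S ∈ E then y S else 0

variable {d : ℕ} {E : Finset (Finset V)} {c : V → ℝ} {T : ℝ} {M : Finset V}
  {r : V → Finset V → ℝ}

theorem utility_of_mem {v : V} (hv : v ∈ M) :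
    utility d E c T M r v = -c v + income d E c M r v - min (demand d E M r v) (c v) := by
  rw [utility, if_pos hv, income]

theorem utility_of_not_mem {v : V} (hv : v ∉ M) :
    utility d E c T M r v =
      -demand d E M r v - (if ∃ S ∈ E, v ∈ S ∧ M ∩ S = ∅ then T else 0) := by
  rw [utility, if_neg hv]

theorem demand_eq_of_deviation {v : V} {M' : Finset V} {r' : V → Finset V → ℝ}
    (h : Deviation v M M' r r') : demand d E M' r' v = demand d E M r v := by
  obtain ⟨hM', hr'⟩ := h
  have hothers : ∀ S : Finset V, (M' ∩ S).erase v = (M ∩ S).erase v := fun S => by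
    ext m
    simp only [mem_erase, mem_inter]
    exact and_congr_right fun hne => and_congr_left fun _ => hM' m hne
  unfold demand
  congr 1
  refine sum_congr rfl fun S _ => ?_
  rw [hothers]
  exact sum_congr rfl fun m hm => hr' m S (ne_of_mem_erase hm)

theorem card_filter_not_add_sum_le_card {α : Type*} (s : Finset α) (p : α → Prop)
    [DecidablePred p] {f : α → ℝ} (hf : ∀ a ∈ s, p a → f a ≤ 1) :
    ((s.filter fun a => ¬p a).card : ℝ) + ∑ a ∈ s.filter p, f a ≤ s.card := by
  have hsum : ∑ a ∈ s.filter p, f a ≤ (s.filter p).card := by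
    simpa using sum_le_sum fun a ha => hf a (mem_filter.1 ha).1 (mem_filter.1 ha).2
  have hcard := congrArg (Nat.cast : ℕ → ℝ) (card_filter_add_card_filter_not (s := s) p)
  push_cast at hcard
  linarith

theorem card_erase_of_mem_club (hunif : ∀ S ∈ E, S.card = d) {S : Finset V} {v : V}
    (hS : S ∈ E) (hv : v ∈ S) : ((S.erase v).card : ℝ) = (d : ℝ) - 1 := by
  have hd : 1 ≤ d := hunif S hS ▸ card_pos.2 ⟨v, hv⟩
  rw [card_erase_of_mem hv, hunif S hS, Nat.cast_sub hd, Nat.cast_one]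

theorem cast_sub_one_pos (hd : 2 ≤ d) : (0 : ℝ) < (d : ℝ) - 1 := by
  have : (2 : ℝ) ≤ d := by exact_mod_cast hd
  linarith

theorem income_le_cost (hd : 2 ≤ d) (hunif : ∀ S ∈ E, S.card = d)
    (hc : ∀ v, 0 ≤ c v) (hvalid : ValidProfile E c M r) {v : V}
    (hv : v ∈ M) : income d E c M r v ≤ c v := by
  have hd1 := cast_sub_one_pos hd
  rw [← hvalid.2.2 v hv, income]
  refine sum_le_sum fun S hS => ?_
  rw [mem_filter] at hS
  set p : V → Prop := fun u => u ∈ M ∧ c u < demand d E M r u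
  have hcoef : (((S.filter fun u => ¬p u).erase v).card : ℝ) +
      ∑ u ∈ (S.filter p).erase v, c u / demand d E M r u ≤ (d : ℝ) - 1 := by
    rw [← filter_erase, ← filter_erase, ← card_erase_of_mem_club hunif hS.1 hS.2]
    refine card_filter_not_add_sum_le_card _ p fun u _ hu => ?_
    exact div_le_one_of_le₀ hu.2.le ((hc u).trans hu.2.le)
  calc r v S / ((d : ℝ) - 1) * _ ≤ r v S / ((d : ℝ) - 1) * ((d : ℝ) - 1) :=
        mul_le_mul_of_nonneg_left hcoef (div_nonneg (hvalid.1 v S) hd1.le)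
    _ = r v S := div_mul_cancel₀ _ hd1.ne'

theorem income_eq_cost_of_demand_le (hd : 2 ≤ d) (hunif : ∀ S ∈ E, S.card = d)
    (hvalid : ValidProfile E c M r)
    (hD : ∀ u, demand d E M r u ≤ c u) {v : V} (hv : v ∈ M) :
    income d E c M r v = c v := by
  have hd1 := (cast_sub_one_pos hd).ne'
  have hunprot : ∀ u, ¬(u ∈ M ∧ c u < demand d E M r u) := fun u h => (hD u).not_gt h.2
  rw [← hvalid.2.2 v hv, income]
  refine sum_congr rfl fun S hS => ?_
  rw [mem_filter] at hS
  rw [filter_true_of_mem fun u _ => hunprot u, filter_false_of_mem fun u _ => hunprot u,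
    card_erase_of_mem_club hunif hS.1 hS.2, erase_empty, sum_empty, add_zero,
    div_mul_cancel₀ _ hd1]

theorem isNashEq_of_demand_le_cost (hd : 2 ≤ d) (hunif : ∀ S ∈ E, S.card = d)
    (hc : ∀ v, 0 ≤ c v) (hT : 0 ≤ T)
    (hM : ∀ S ∈ E, (M ∩ S).Nonempty) (hvalid : ValidProfile E c M r)
    (hD : ∀ u, demand d E M r u ≤ c u) : IsNashEq d E c T M r := by
  have hU : ∀ v, utility d E c T M r v = -demand d E M r v := fun v => by
    by_cases hv : v ∈ M
    · rw [utility_of_mem hv, income_eq_cost_of_demand_le hd hunif hvalid hD hv,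
        min_eq_left (hD v)]
      ring
    · have hcovered : ¬∃ S ∈ E, v ∈ S ∧ M ∩ S = ∅ := fun ⟨S, hS, _, hMS⟩ =>
        (hM S hS).ne_empty hMS
      rw [utility_of_not_mem hv, if_neg hcovered, sub_zero]
  refine ⟨hvalid, fun v M' r' hvalid' hdev => ?_⟩
  rw [hU v, ← demand_eq_of_deviation hdev]
  by_cases hv' : v ∈ M'
  · rw [utility_of_mem hv', demand_eq_of_deviation hdev, min_eq_left (hD v)]
    linarith [income_le_cost hd hunif hc hvalid' hv']
  · rw [utility_of_not_mem hv']
    split_ifs <;> linarith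

theorem validProfile_dualRansom {y : Finset V → ℝ} (hy0 : ∀ S, 0 ≤ y S)
    (htight : ∀ v ∈ M, ∑ S ∈ E.filter (fun S => v ∈ S), y S = c v) :
    ValidProfile E c M (dualRansom E M y) := by
  refine ⟨fun m S => ?_, fun m S h => ?_, fun m hm => ?_⟩
  · unfold dualRansom
    split_ifs
    exacts [hy0 S, le_rfl]
  · rw [dualRansom, if_neg]
    tauto
  · rw [← htight m hm]
    refine sum_congr rfl fun S hS => ?_
    rw [mem_filter] at hS
    rw [dualRansom, if_pos ⟨hm, hS.2, hS.1⟩]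

theorem demand_dualRansom_le (hd : 2 ≤ d) (hunif : ∀ S ∈ E, S.card = d)
    {y : Finset V → ℝ} (hy0 : ∀ S, 0 ≤ y S) (v : V) :
    demand d E M (dualRansom E M y) v ≤ ∑ S ∈ E.filter (fun S => v ∈ S), y S := by
  have hd1 := cast_sub_one_pos hd
  have hclub : ∀ S ∈ E.filter (fun S => v ∈ S),
      ∑ m ∈ (M ∩ S).erase v, dualRansom E M y m S ≤ ((d : ℝ) - 1) * y S := by
    intro S hS
    rw [mem_filter] at hS
    have hcard : (((M ∩ S).erase v).card : ℝ) ≤ (d : ℝ) - 1 := by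
      rw [← card_erase_of_mem_club hunif hS.1 hS.2]
      exact_mod_cast card_le_card (erase_subset_erase v inter_subset_right)
    calc ∑ m ∈ (M ∩ S).erase v, dualRansom E M y m S
        = ∑ m ∈ (M ∩ S).erase v, y S := sum_congr rfl fun m hm => by
          simp only [mem_erase, mem_inter] at hm
          rw [dualRansom, if_pos ⟨hm.2.1, hm.2.2, hS.1⟩]
      _ = (((M ∩ S).erase v).card : ℝ) * y S := by rw [sum_const, nsmul_eq_mul]
      _ ≤ ((d : ℝ) - 1) * y S := mul_le_mul_of_nonneg_right hcard (hy0 S)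
  calc demand d E M (dualRansom E M y) v
      ≤ 1 / ((d : ℝ) - 1) * ∑ S ∈ E.filter (fun S => v ∈ S), ((d : ℝ) - 1) * y S :=
        mul_le_mul_of_nonneg_left (sum_le_sum hclub) (by positivity)
    _ = ∑ S ∈ E.filter (fun S => v ∈ S), y S := by
        rw [← mul_sum, ← mul_assoc, one_div_mul_cancel hd1.ne', one_mul]

/-- a complementary pair `(M, y)` yields a pure Nash equilibrium of the
Mafia Hitting Set Game, where `M` is the Mafia and each mafioso `m` demands `r(m,S) = y S`
on every club `S` containing him. -/
theorem stmt_11 (d : ℕ) (hd : 2 ≤ d) (E : Finset (Finset V))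
    (hunif : ∀ S ∈ E, S.card = d)
    (c : V → ℝ) (hc : ∀ v, 0 ≤ c v) (T : ℝ) (hT : 2 * ∑ v, c v < T)
    (M : Finset V) (y : Finset V → ℝ)
    (hM : ∀ S ∈ E, (M ∩ S).Nonempty)
    (hy0 : ∀ S, 0 ≤ y S)
    (hyfeas : ∀ v : V, ∑ S ∈ E.filter (fun S => v ∈ S), y S ≤ c v)
    (htight : ∀ v ∈ M, ∑ S ∈ E.filter (fun S => v ∈ S), y S = c v) :
    IsNashEq d E c T M (fun m S => if m ∈ M ∧ m ∈ S ∧ S ∈ E then y S else 0) := by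
  have hT0 : 0 ≤ T := by
    linarith [sum_nonneg fun v (_ : v ∈ (univ : Finset V)) => hc v]
  exact isNashEq_of_demand_le_cost hd hunif hc hT0 hM (validProfile_dualRansom hy0 htight)
    fun v => (demand_dualRansom_le hd hunif hy0 v).trans (hyfeas v)

end
end MafiaHS
end
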